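/- arXiv:1903.01208 — 2 statements merged into one kernel-verified Lean document; each statement's English description precedes it below -/
import Mathlib

section
/- Let A ∈ ℝ^{m×n} be a matrix with unit ℓ²-norm columns a₁,…,aₙ, partitioned into N ≥ 2 blocks via a block-assignment map π : {1,…,n} → {1,…,N}. Suppose μ > 0 is such that |⟨a_j, a_k⟩| ≤ μ for all j ≠ k, and there are constants α_i ∈ [0,1] such that |⟨a_j, a_k⟩| ≤ α_i μ whenever j ≠ k and π(j) = π(k) = i; set α_max = max_i α_i. Then every nonzero vector z ∈ ℝⁿ with Az = 0 satisfies ‖z‖₀ ≥ N(1 + α_max μ)/((N − 1 + α_max)μ); equivalently, spark(A) ≥ N(1 + α_max μ)/((N − 1 + α_max)μ). -/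
/-- The number of nonzero entries of a vector (`‖z‖₀`). -/
noncomputable def l0 {n : ℕ} (z : Fin n → ℝ) : ℕ :=
  (Finset.univ.filter fun j => z j ≠ 0).card

/-! If `A z = 0` then `z` is isotropic for the Gram matrix `AᵀA`, whose diagonal is `1`; so
`‖z‖₂²` is bounded by the off-diagonal terms `∑_{j ≠ k} |z_j| |z_k| |⟨a_j, a_k⟩|`, each at most
`α_max μ |z_j| |z_k|` within a block and `μ |z_j| |z_k|` across blocks. In terms of the block masses
`W_i = ∑_{π j = i} |z_j|` and `T = ∑_i W_i = ‖z‖₁` this reads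
`(1 + α_max μ) ‖z‖₂² ≤ μ T² - (1 - α_max) μ ∑_i W_i²`. Cauchy–Schwarz over the `N` blocks gives
`∑_i W_i² ≥ T² / N`, and over the support of `z` gives `T² ≤ ‖z‖₀ ‖z‖₂²`. -/

open Finset Matrix

theorem one_add_mul_dotProduct_self_le_of_isotropic {ι : Type*} [Fintype ι] [DecidableEq ι]
    (G C : Matrix ι ι ℝ) (c : ℝ) (z : ι → ℝ) (hG : ∀ j, G j j = 1)
    (hC : ∀ j k, j ≠ k → |G j k| ≤ C j k) (hCdiag : ∀ j, C j j = c)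
    (hz : z ⬝ᵥ G *ᵥ z = 0) :
    (1 + c) * (z ⬝ᵥ z) ≤ ∑ j, ∑ k, |z j| * |z k| * C j k := by
  have hterm : ∀ j k, -(z j * G j k * z k) + (if j = k then (1 + c) * (z j * z j) else 0)
      ≤ |z j| * |z k| * C j k := by
    intro j k
    by_cases hjk : j = k
    · subst hjk
      rw [if_pos rfl, hG, hCdiag, abs_mul_abs_self]
      linarith
    · rw [if_neg hjk, add_zero]
      calc -(z j * G j k * z k) ≤ |z j| * |z k| * |G j k| := by
            rw [← abs_mul, ← abs_mul]; exact (neg_le_abs _).trans_eq (by ring_nf)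
        _ ≤ |z j| * |z k| * C j k := by gcongr; exact hC j k hjk
  have hz' : ∑ j, ∑ k, z j * G j k * z k = 0 := by
    simpa [dotProduct, mulVec, mul_sum, mul_assoc] using hz
  calc (1 + c) * (z ⬝ᵥ z)
      = ∑ j, ∑ k, (-(z j * G j k * z k) + if j = k then (1 + c) * (z j * z j) else 0) := by
        simp [sum_add_distrib, hz', dotProduct, mul_sum]
    _ ≤ ∑ j, ∑ k, |z j| * |z k| * C j k := sum_le_sum fun j _ => sum_le_sum fun k _ => hterm j k

theorem sum_sum_ite_eq_sum_sq_sum_fiber {ι κ R : Type*} [Fintype ι] [Fintype κ] [DecidableEq κ]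
    [CommSemiring R] (π : ι → κ) (w : ι → R) :
    ∑ j, ∑ k, (if π j = π k then w j * w k else 0) = ∑ i, (∑ j with π j = i, w j) ^ 2 := by
  calc ∑ j, ∑ k, (if π j = π k then w j * w k else 0)
      = ∑ i, ∑ j with π j = i, ∑ k, (if π j = π k then w j * w k else 0) :=
        (sum_fiberwise univ π _).symm
    _ = ∑ i, (∑ j with π j = i, w j) ^ 2 := by
        refine sum_congr rfl fun i _ => ?_
        rw [sq, sum_mul_sum]
        refine sum_congr rfl fun j hj => ?_
        rw [(mem_filter.mp hj).2, sum_filter]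
        simp_rw [eq_comm (a := i)]

theorem card_mul_sum_sum_ite_le {ι κ : Type*} [Fintype ι] [Fintype κ] [DecidableEq κ]
    (π : ι → κ) (w : ι → ℝ) {a b : ℝ} (hab : a ≤ b) :
    Fintype.card κ * ∑ j, ∑ k, w j * w k * (if π j = π k then a else b)
      ≤ ((Fintype.card κ - 1) * b + a) * (∑ j, w j) ^ 2 := by
  have hsplit : ∑ j, ∑ k, w j * w k * (if π j = π k then a else b)
      = b * (∑ j, w j) ^ 2 + (a - b) * ∑ i, (∑ j with π j = i, w j) ^ 2 := by
    rw [← sum_sum_ite_eq_sum_sq_sum_fiber, sq, sum_mul_sum]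
    simp only [mul_sum, ← sum_add_distrib]
    refine sum_congr rfl fun j _ => sum_congr rfl fun k _ => ?_
    split_ifs <;> ring
  have hCS : (∑ j, w j) ^ 2 ≤ Fintype.card κ * ∑ i, (∑ j with π j = i, w j) ^ 2 := by
    rw [← sum_fiberwise univ π w]
    exact sq_sum_le_card_mul_sum_sq
  rw [hsplit]
  nlinarith [mul_le_mul_of_nonneg_left hCS (sub_nonneg.mpr hab)]

theorem sq_sum_abs_le_l0_mul_dotProduct_self {n : ℕ} (z : Fin n → ℝ) :
    (∑ j, |z j|) ^ 2 ≤ l0 z * (z ⬝ᵥ z) := by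
  have hT : ∑ j with z j ≠ 0, |z j| = ∑ j, |z j| :=
    sum_filter_of_ne fun j _ h => abs_ne_zero.mp h
  have hQ : ∑ j with z j ≠ 0, |z j| ^ 2 = z ⬝ᵥ z := by
    rw [sum_filter_of_ne fun j _ h => by simpa using h]
    simp [dotProduct, sq]
  rw [← hT, ← hQ, l0]
  exact sq_sum_le_card_mul_sum_sq

theorem piecewise_spark_lower_bound_general {m n N : ℕ}
    (A : Matrix (Fin m) (Fin n) ℝ) (π : Fin n → Fin N)
    (hunit : ∀ j, ∑ i, A i j * A i j = 1)
    (μ : ℝ) (hμ : 0 < μ)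
    (hcoh : ∀ j k, j ≠ k → |∑ i, A i j * A i k| ≤ μ)
    (α : Fin N → ℝ) (hα0 : ∀ i, 0 ≤ α i) (hα1 : ∀ i, α i ≤ 1)
    (hblock : ∀ j k, j ≠ k → π j = π k → |∑ i, A i j * A i k| ≤ α (π j) * μ)
    (αmax : ℝ) (hαmax : IsGreatest (Set.range α) αmax) :
    ∀ z : Fin n → ℝ, z ≠ 0 → A.mulVec z = 0 →
      (N : ℝ) * (1 + αmax * μ) / (((N : ℝ) - 1 + αmax) * μ) ≤ (l0 z : ℝ) := by
  intro z hz hAz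
  obtain ⟨⟨i₀, hi₀⟩, hαle⟩ := hαmax
  have hN : (1 : ℝ) ≤ N := by exact_mod_cast i₀.pos
  have hαmax0 : 0 ≤ αmax := hi₀ ▸ hα0 i₀
  have hαmax1 : αmax ≤ 1 := hi₀ ▸ hα1 i₀
  have hgram : ∀ j k, (Aᵀ * A) j k = ∑ i, A i j * A i k := fun j k => by
    simp [Matrix.mul_apply]
  have hbound : (1 + αmax * μ) * (z ⬝ᵥ z)
      ≤ ∑ j, ∑ k, |z j| * |z k| * (if π j = π k then αmax * μ else μ) := by
    refine one_add_mul_dotProduct_self_le_of_isotropic _ _ _ z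
      (fun j => (hgram j j).trans (hunit j)) (fun j k hjk => ?_) (fun j => if_pos rfl)
      (by simp [← mulVec_mulVec, hAz])
    rw [hgram]
    split_ifs with hπ
    · exact (hblock j k hjk hπ).trans (by gcongr; exact hαle ⟨π j, rfl⟩)
    · exact hcoh j k hjk
  have hblocks := card_mul_sum_sum_ite_le π (fun j => |z j|) (a := αmax * μ) (b := μ)
    (mul_le_of_le_one_left hμ.le hαmax1)
  rw [Fintype.card_fin] at hblocks
  have hsupp := sq_sum_abs_le_l0_mul_dotProduct_self z
  have hQ : 0 < z ⬝ᵥ z := by simpa using dotProduct_self_star_pos_iff.mpr hz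
  refine div_le_of_le_mul₀ (by positivity) (Nat.cast_nonneg _) (le_of_mul_le_mul_right ?_ hQ)
  calc N * (1 + αmax * μ) * (z ⬝ᵥ z)
      = N * ((1 + αmax * μ) * (z ⬝ᵥ z)) := by ring
    _ ≤ N * ∑ j, ∑ k, |z j| * |z k| * (if π j = π k then αmax * μ else μ) := by gcongr
    _ ≤ ((N - 1) * μ + αmax * μ) * (∑ j, |z j|) ^ 2 := hblocks
    _ ≤ ((N - 1) * μ + αmax * μ) * (l0 z * (z ⬝ᵥ z)) := by gcongr
    _ = l0 z * (((N : ℝ) - 1 + αmax) * μ) * (z ⬝ᵥ z) := by ring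

/-- **Lower bound on the spark of a union of general bases.**
If `A` has unit-norm columns partitioned into `N ≥ 2` blocks by `π`, overall coherence
bounded by `μ > 0`, within-block coherence of block `i` bounded by `α i * μ` with
`α i ∈ [0,1]` and `αmax = max_i α i`, then every nonzero `z` with `A z = 0` satisfies
`‖z‖₀ ≥ N (1 + αmax μ) / ((N - 1 + αmax) μ)`, i.e. `spark(A)` is at least this bound. -/
theorem piecewise_spark_lower_bound {m n N : ℕ} (hN : 2 ≤ N)
    (A : Matrix (Fin m) (Fin n) ℝ) (π : Fin n → Fin N)
    (hunit : ∀ j, ∑ i, A i j * A i j = 1)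
    (μ : ℝ) (hμ : 0 < μ)
    (hcoh : ∀ j k, j ≠ k → |∑ i, A i j * A i k| ≤ μ)
    (α : Fin N → ℝ) (hα0 : ∀ i, 0 ≤ α i) (hα1 : ∀ i, α i ≤ 1)
    (hblock : ∀ j k, j ≠ k → π j = π k → |∑ i, A i j * A i k| ≤ α (π j) * μ)
    (αmax : ℝ) (hαmax : IsGreatest (Set.range α) αmax) :
    ∀ z : Fin n → ℝ, z ≠ 0 → A.mulVec z = 0 →
      (N : ℝ) * (1 + αmax * μ) / (((N : ℝ) - 1 + αmax) * μ) ≤ (l0 z : ℝ) :=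
  piecewise_spark_lower_bound_general A π hunit μ hμ hcoh α hα0 hα1 hblock αmax hαmax
end

section
/- Let A ∈ ℝ^{m×n} have unit ℓ²-norm columns a₁,…,aₙ and suppose μ > 0 satisfies |⟨a_j, a_k⟩| ≤ μ for all j ≠ k. Then every nonzero vector z ∈ ℝⁿ with Az = 0 satisfies ‖z‖₀ ≥ 1 + 1/μ; equivalently, spark(A) ≥ 1 + 1/μ, so any set of s columns of A with (s − 1)μ < 1 is linearly independent. -/
open Finset

namespace Matrix

theorem det_ne_zero_of_diag_eq_one_of_norm_le {K ι : Type*} [NormedField K] [Fintype ι]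
    [DecidableEq ι] {G : Matrix ι ι K} {μ : ℝ} (hdiag : ∀ j, G j j = 1)
    (hoff : ∀ j k, j ≠ k → ‖G j k‖ ≤ μ) (hcard : ((Fintype.card ι : ℝ) - 1) * μ < 1) :
    G.det ≠ 0 := by
  refine det_ne_zero_of_sum_row_lt_diag fun k => ?_
  calc ∑ j ∈ univ.erase k, ‖G k j‖ ≤ ∑ j ∈ univ.erase k, μ :=
        sum_le_sum fun j hj => hoff k j (ne_of_mem_erase hj).symm
    _ = ((Fintype.card ι : ℝ) - 1) * μ := by
        rw [sum_const, card_erase_of_mem (mem_univ k), card_univ, nsmul_eq_mul,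
          Nat.cast_pred (Fintype.card_pos_iff.mpr ⟨k⟩)]
    _ < ‖G k k‖ := by rwa [hdiag, norm_one]

theorem linearIndependent_col_of_det_transpose_mul_self_ne_zero {R m ι : Type*}
    [CommRing R] [IsDomain R] [Fintype m] [Fintype ι] [DecidableEq ι] {B : Matrix m ι R}
    (h : (Bᵀ * B).det ≠ 0) : LinearIndependent R B.col :=
  mulVec_injective_iff.mp fun x y hxy =>
    mulVec_injective_of_det_ne_zero h (by simp only [← mulVec_mulVec, hxy])

theorem not_linearIndependent_col_submatrix_of_mulVec_eq_zero {R m n : Type*} [CommRing R]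
    [Fintype n] {A : Matrix m n R} {z : n → R} (hz : z ≠ 0) (hAz : A *ᵥ z = 0)
    {S : Finset n} (hsupp : ∀ j ∉ S, z j = 0) :
    ¬LinearIndependent R (A.submatrix id ((↑) : S → n)).col := by
  intro hindep
  have hrestrict : A.submatrix id ((↑) : S → n) *ᵥ (fun j => z j) = 0 := by
    ext i
    rw [← congrFun hAz i]
    simp only [mulVec, dotProduct, submatrix_apply, id]
    rw [sum_coe_sort S (fun j => A i j * z j)]
    exact sum_subset (subset_univ S) fun j _ hj => by rw [hsupp j hj, mul_zero]
  have hzS : (fun j : S => z j) = 0 :=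
    mulVec_injective_iff.mpr hindep (hrestrict.trans (mulVec_zero _).symm)
  refine hz (funext fun j => ?_)
  by_cases hj : j ∈ S
  · exact congrFun hzS ⟨j, hj⟩
  · exact hsupp j hj

end Matrix

open Matrix

theorem coherence_spark_lower_bound_general {m n : ℕ}
    (A : Matrix (Fin m) (Fin n) ℝ)
    (hunit : ∀ j, ∑ i, A i j * A i j = 1)
    (μ : ℝ)
    (hcoh : ∀ j k, j ≠ k → |∑ i, A i j * A i k| ≤ μ) :
    (∀ z : Fin n → ℝ, z ≠ 0 → A.mulVec z = 0 → 1 + 1 / μ ≤ (l0 z : ℝ)) ∧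
      ∀ S : Finset (Fin n), ((S.card : ℝ) - 1) * μ < 1 →
        LinearIndependent ℝ (fun j : ↥S => fun i => A i (j : Fin n)) := by
  have hindep (S : Finset (Fin n)) (hS : ((S.card : ℝ) - 1) * μ < 1) :
      LinearIndependent ℝ (A.submatrix id ((↑) : S → Fin n)).col :=
    linearIndependent_col_of_det_transpose_mul_self_ne_zero <|
      det_ne_zero_of_diag_eq_one_of_norm_le (fun j => hunit j)
        (fun j k hjk => hcoh j k (Subtype.coe_injective.ne hjk)) (by rwa [Fintype.card_coe])
  refine ⟨fun z hz hAz => ?_, hindep⟩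
  set S := univ.filter fun j => z j ≠ 0
  have hS : 1 ≤ ((S.card : ℝ) - 1) * μ := not_lt.mp fun hlt =>
    not_linearIndependent_col_submatrix_of_mulVec_eq_zero hz hAz
      (fun j hj => by simpa [S] using hj) (hindep S hlt)
  have hcard : (1 : ℝ) ≤ S.card := by
    obtain ⟨j, hj⟩ := Function.ne_iff.mp hz
    exact_mod_cast card_pos.mpr ⟨j, by simpa [S] using hj⟩
  have hμ : 0 < μ := pos_of_mul_pos_right (one_pos.trans_le hS) (by linarith)
  have : 1 / μ ≤ (S.card : ℝ) - 1 := by rwa [div_le_iff₀ hμ]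
  change 1 + 1 / μ ≤ (S.card : ℝ)
  linarith

/-- **Coherence-based lower bound on the spark: `spark(A) ≥ 1 + 1/μ`.**
If `A` has unit-norm columns with mutual coherence bounded by `μ > 0`, then every nonzero
`z` with `A z = 0` satisfies `‖z‖₀ ≥ 1 + 1/μ`; consequently, any set `S` of columns of
`A` with `(|S| − 1) μ < 1` is linearly independent. -/
theorem coherence_spark_lower_bound {m n : ℕ}
    (A : Matrix (Fin m) (Fin n) ℝ)
    (hunit : ∀ j, ∑ i, A i j * A i j = 1)
    (μ : ℝ) (hμ : 0 < μ)
    (hcoh : ∀ j k, j ≠ k → |∑ i, A i j * A i k| ≤ μ) :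
    (∀ z : Fin n → ℝ, z ≠ 0 → A.mulVec z = 0 → 1 + 1 / μ ≤ (l0 z : ℝ)) ∧
      ∀ S : Finset (Fin n), ((S.card : ℝ) - 1) * μ < 1 →
        LinearIndependent ℝ (fun j : ↥S => fun i => A i (j : Fin n)) :=
  coherence_spark_lower_bound_general A hunit μ hcoh
end
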